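/- arXiv:2103.10980 — 2 statements merged into one kernel-verified Lean document; each statement's English description precedes it below -/
import Mathlib

section
/- If M̂ is a closed maximal ideal of B₁(X) whose contraction M̂ ∩ C(X) is contained in some real maximal ideal of C(X), then there exists a unique real maximal ideal M of C(X) with M̂ = M_B. -/
open Filter Topology

def CFun (X : Type*) [TopologicalSpace X] : Subring (X → ℝ) where
  carrier := {f | Continuous f}
  one_mem' := continuous_const
  zero_mem' := continuous_const
  add_mem' := fun hf hg => hf.add hg
  mul_mem' := fun hf hg => hf.mul hg
  neg_mem' := fun hf => hf.neg

def B1 (X : Type*) [TopologicalSpace X] : Subring (X → ℝ) where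
  carrier := {f | ∃ u : ℕ → C(X, ℝ), ∀ x, Tendsto (fun n => u n x) atTop (𝓝 (f x))}
  one_mem' := ⟨fun _ => 1, fun _ => tendsto_const_nhds⟩
  zero_mem' := ⟨fun _ => 0, fun _ => tendsto_const_nhds⟩
  add_mem' := by
    rintro f g ⟨u, hu⟩ ⟨v, hv⟩
    exact ⟨fun n => u n + v n, fun x => (hu x).add (hv x)⟩
  mul_mem' := by
    rintro f g ⟨u, hu⟩ ⟨v, hv⟩
    exact ⟨fun n => u n * v n, fun x => (hu x).mul (hv x)⟩
  neg_mem' := by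
    rintro f ⟨u, hu⟩
    exact ⟨fun n => -u n, fun x => (hu x).neg⟩

theorem CFun_le_B1 (X : Type*) [TopologicalSpace X] : CFun X ≤ B1 X :=
  fun f hf => ⟨fun _ => ⟨f, hf⟩, fun _ => tendsto_const_nhds⟩

def inclB (X : Type*) [TopologicalSpace X] : CFun X →+* B1 X :=
  Subring.inclusion (CFun_le_B1 X)

def idealB {X : Type*} [TopologicalSpace X] (I : Ideal (CFun X)) : Set (B1 X) :=
  {f | ∃ u : ℕ → CFun X, (∀ n, u n ∈ I) ∧
    ∀ x, Tendsto (fun n => (u n : X → ℝ) x) atTop (𝓝 ((f : X → ℝ) x))}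

def IsRealMax {X : Type*} [TopologicalSpace X] (M : Ideal (CFun X)) : Prop :=
  M.IsMaximal ∧ Nonempty ((CFun X ⧸ M) ≃+* ℝ)

def IsRealMaxB {X : Type*} [TopologicalSpace X] (M : Ideal (B1 X)) : Prop :=
  M.IsMaximal ∧ Nonempty ((B1 X ⧸ M) ≃+* ℝ)

def evalC {X : Type*} [TopologicalSpace X] (p : X) : CFun X →+* ℝ :=
  (Pi.evalRingHom (fun _ => ℝ) p).comp (CFun X).subtype

def evalB {X : Type*} [TopologicalSpace X] (p : X) : B1 X →+* ℝ :=
  (Pi.evalRingHom (fun _ => ℝ) p).comp (B1 X).subtype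

def constB1 {X : Type*} [TopologicalSpace X] (r : ℝ) : B1 X :=
  ⟨fun _ => r, ⟨fun _ => ContinuousMap.const X r, fun _ => tendsto_const_nhds⟩⟩

/-!
A ring homomorphism `φ : C(X) → ℝ` is positive (`f = (√f)²`), hence monotone, so it commutes
with the uniformly convergent sum `K = ∑ 2⁻ⁿ gₙ² / (1 + gₙ²)`. If `φ (gₙ) = 0` for all `n`, then
`φ K = 0`; so `K` is not a unit and has a zero, which is a common zero of all the `gₙ`. Hence no
sequence in a real maximal ideal `M` converges pointwise to `1`, i.e. `M_B` is a proper ideal of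
`B₁(X)`. A closed maximal `M̂` satisfies `M̂ = (M̂ ∩ C(X))_B ⊆ M_B`, so `M̂ = M_B` by maximality;
and a maximal `M` with `M̂ = M_B` contains, hence equals, the contraction `M̂ ∩ C(X)`.
-/

namespace CFun

variable {X : Type*} [TopologicalSpace X]

def constHom (X : Type*) [TopologicalSpace X] : ℝ →+* CFun X where
  toFun r := ⟨fun _ => r, continuous_const⟩
  map_one' := rfl
  map_mul' _ _ := rfl
  map_zero' := rfl
  map_add' _ _ := rfl

@[simp]
theorem constHom_apply (r : ℝ) (x : X) : (constHom X r : X → ℝ) x = r := rfl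

variable (φ : CFun X →+* ℝ)

@[simp]
theorem map_constHom (r : ℝ) : φ (constHom X r) = r :=
  RingHom.congr_fun (Subsingleton.elim (φ.comp (constHom X)) (RingHom.id ℝ)) r

theorem map_nonneg {f : CFun X} (hf : ∀ x, 0 ≤ (f : X → ℝ) x) : 0 ≤ φ f := by
  let s : CFun X := ⟨fun x => Real.sqrt ((f : X → ℝ) x), Real.continuous_sqrt.comp f.2⟩
  have hs : s * s = f := Subtype.ext <| funext fun x => Real.mul_self_sqrt (hf x)
  simpa only [← hs, map_mul] using mul_self_nonneg (φ s)

theorem map_le_map {f g : CFun X} (h : ∀ x, (f : X → ℝ) x ≤ (g : X → ℝ) x) : φ f ≤ φ g := by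
  have := map_nonneg φ (f := g - f) fun x => sub_nonneg.2 (h x)
  rwa [map_sub, sub_nonneg] at this

theorem exists_apply_eq_zero {f : CFun X} (hf : φ f = 0) : ∃ x, (f : X → ℝ) x = 0 := by
  by_contra! hne
  let f' : CFun X := ⟨fun x => ((f : X → ℝ) x)⁻¹, f.2.inv₀ hne⟩
  have hunit : f * f' = 1 := Subtype.ext <| funext fun x => mul_inv_cancel₀ (hne x)
  simpa [hf] using congrArg φ hunit

theorem exists_forall_apply_eq_zero_of_le_one {g : ℕ → CFun X}
    (hg₀ : ∀ n x, 0 ≤ (g n : X → ℝ) x) (hg₁ : ∀ n x, (g n : X → ℝ) x ≤ 1)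
    (hφ : ∀ n, φ (g n) = 0) : ∃ x, ∀ n, (g n : X → ℝ) x = 0 := by
  set w : ℕ → ℝ := fun n => (1 / 2) ^ n with hw
  have hw₀ : ∀ n, 0 < w n := fun n => by positivity
  have hterm : ∀ n x, w n * (g n : X → ℝ) x ≤ w n := fun n x =>
    mul_le_of_le_one_right (hw₀ n).le (hg₁ n x)
  have hterm₀ : ∀ n x, 0 ≤ w n * (g n : X → ℝ) x := fun n x =>
    mul_nonneg (hw₀ n).le (hg₀ n x)
  have hsum : ∀ x, Summable fun n => w n * (g n : X → ℝ) x := fun x =>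
    summable_geometric_two.of_nonneg_of_le (hterm₀ · x) (hterm · x)
  let K : CFun X := ⟨fun x => ∑' n, w n * (g n : X → ℝ) x,
    continuous_tsum (fun n => continuous_const.mul (g n).2) summable_geometric_two
      fun n x => by rw [Real.norm_of_nonneg (hterm₀ n x)]; exact hterm n x⟩
  let P : ℕ → CFun X := fun N => ∑ n ∈ Finset.range N, constHom X (w n) * g n
  have hP : ∀ N x, (P N : X → ℝ) x = ∑ n ∈ Finset.range N, w n * (g n : X → ℝ) x := by
    intro N x
    simp [P, Finset.sum_apply]
  have hKP : ∀ N x, (K : X → ℝ) x ≤ ((P N + constHom X (2 * w N) : CFun X) : X → ℝ) x := by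
    intro N x
    have htail : ∑' n, w (n + N) * (g (n + N) : X → ℝ) x ≤ 2 * w N := by
      calc ∑' n, w (n + N) * (g (n + N) : X → ℝ) x ≤ ∑' n, w (n + N) :=
            ((summable_nat_add_iff N).2 (hsum x)).tsum_le_tsum (fun n => hterm _ x)
              ((summable_nat_add_iff N).2 summable_geometric_two)
        _ = 2 * w N := by simp only [hw, pow_add, tsum_mul_right, tsum_geometric_two]
    change ∑' n, w n * (g n : X → ℝ) x ≤ (P N : X → ℝ) x + 2 * w N
    rw [hP, ← (hsum x).sum_add_tsum_nat_add N]
    linarith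
  have hK : φ K = 0 := by
    have hlim : Tendsto (fun N => 2 * w N) atTop (𝓝 0) := by
      simpa only [mul_zero] using
        (tendsto_pow_atTop_nhds_zero_of_lt_one (r := (1 / 2 : ℝ)) (by norm_num)
          (by norm_num)).const_mul 2
    refine le_antisymm (ge_of_tendsto' hlim fun N => ?_)
      (map_nonneg φ fun x => tsum_nonneg (hterm₀ · x))
    calc φ K ≤ φ (P N + constHom X (2 * w N)) := map_le_map φ (hKP N)
      _ = 2 * w N := by simp [P, map_sum, hφ]
  obtain ⟨x, hx⟩ := exists_apply_eq_zero φ hK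
  refine ⟨x, fun n => le_antisymm ?_ (hg₀ n x)⟩
  have := (hsum x).le_tsum n fun m _ => hterm₀ m x
  change ∑' n, _ = 0 at hx
  nlinarith [hw₀ n]

theorem exists_forall_apply_eq_zero {g : ℕ → CFun X} (hφ : ∀ n, φ (g n) = 0) :
    ∃ x, ∀ n, (g n : X → ℝ) x = 0 := by
  let q : ℕ → CFun X := fun n => ⟨fun x => (g n : X → ℝ) x / (1 + (g n : X → ℝ) x ^ 2),
    by
      change Continuous _
      exact (g n).2.div (continuous_const.add ((g n).2.pow 2)) fun x => by positivity⟩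
  have hgq : ∀ n x, ((g n * q n : CFun X) : X → ℝ) x
      = (g n : X → ℝ) x ^ 2 / (1 + (g n : X → ℝ) x ^ 2) := fun n x => by
    change (g n : X → ℝ) x * ((g n : X → ℝ) x / (1 + (g n : X → ℝ) x ^ 2)) = _
    ring
  obtain ⟨x, hx⟩ := exists_forall_apply_eq_zero_of_le_one φ (g := fun n => g n * q n)
    (fun n x => by rw [hgq]; positivity)
    (fun n x => by rw [hgq, div_le_one (by positivity)]; linarith)
    (fun n => by rw [map_mul, hφ, zero_mul])
  refine ⟨x, fun n => ?_⟩
  have := hx n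
  rw [hgq, div_eq_zero_iff] at this
  exact pow_eq_zero_iff two_ne_zero |>.1 (this.resolve_right (by positivity))

end CFun

section IdealB

variable {X : Type*} [TopologicalSpace X]

def idealBIdeal (I : Ideal (CFun X)) : Ideal (B1 X) where
  carrier := idealB I
  zero_mem' := ⟨fun _ => 0, fun _ => I.zero_mem, fun _ => tendsto_const_nhds⟩
  add_mem' := by
    rintro f g ⟨u, hu, hul⟩ ⟨v, hv, hvl⟩
    exact ⟨u + v, fun n => I.add_mem (hu n) (hv n), fun x => (hul x).add (hvl x)⟩
  smul_mem' := by
    rintro ⟨c, v, hv⟩ f ⟨u, hu, hul⟩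
    exact ⟨fun n => ⟨v n, (v n).continuous⟩ * u n, fun n => I.mul_mem_left _ (hu n),
      fun x => (hv x).mul (hul x)⟩

theorem idealB_mono {I J : Ideal (CFun X)} (h : I ≤ J) : idealB I ⊆ idealB J :=
  fun _ ⟨u, hu, hul⟩ => ⟨u, fun n => h (hu n), hul⟩

theorem inclB_mem_idealB {I : Ideal (CFun X)} {f : CFun X} (hf : f ∈ I) :
    inclB X f ∈ idealB I :=
  ⟨fun _ => f, fun _ => hf, fun _ => tendsto_const_nhds⟩

theorem one_notMem_idealB {I : Ideal (CFun X)} (φ : CFun X →+* ℝ) (hI : I ≤ RingHom.ker φ) :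
    (1 : B1 X) ∉ idealB I := by
  rintro ⟨u, hu, hul⟩
  obtain ⟨x, hx⟩ := CFun.exists_forall_apply_eq_zero φ fun n => hI (hu n)
  have h0 : Tendsto (fun n => (u n : X → ℝ) x) atTop (𝓝 0) := by simp [hx]
  exact zero_ne_one (tendsto_nhds_unique h0 (hul x))

theorem IsRealMax.exists_le_ker {M : Ideal (CFun X)} (hM : IsRealMax M) :
    ∃ φ : CFun X →+* ℝ, M ≤ RingHom.ker φ := by
  obtain ⟨-, ⟨e⟩⟩ := hM
  refine ⟨e.toRingHom.comp (Ideal.Quotient.mk M), fun f hf => ?_⟩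
  simp [RingHom.mem_ker, Ideal.Quotient.eq_zero_iff_mem.2 hf]

theorem eq_comap_of_coe_eq_idealB {N : Ideal (B1 X)} (hN : N ≠ ⊤) {M : Ideal (CFun X)}
    (hM : M.IsMaximal) (h : (N : Set (B1 X)) = idealB M) : M = N.comap (inclB X) :=
  hM.eq_of_le (Ideal.comap_ne_top _ hN) fun _ hf => by
    rw [Ideal.mem_comap, ← SetLike.mem_coe, h]
    exact inclB_mem_idealB hf

end IdealB

theorem closed_maximal_is_idealB {X : Type*} [TopologicalSpace X]
    (N : Ideal (B1 X)) (hN : N.IsMaximal)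
    (hclosed : idealB (Ideal.comap (inclB X) N) = (↑N : Set (B1 X)))
    (hcont : ∃ M : Ideal (CFun X), IsRealMax M ∧ Ideal.comap (inclB X) N ≤ M) :
    ∃! M : Ideal (CFun X), IsRealMax M ∧ (↑N : Set (B1 X)) = idealB M := by
  obtain ⟨M, hMreal, hle⟩ := hcont
  obtain ⟨φ, hφ⟩ := hMreal.exists_le_ker
  have hNle : N ≤ idealBIdeal M := fun f hf => idealB_mono hle (hclosed ▸ hf)
  have hproper : idealBIdeal M ≠ ⊤ := (Ideal.ne_top_iff_one _).2 (one_notMem_idealB φ hφ)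
  have hNM : (N : Set (B1 X)) = idealB M := congrArg SetLike.coe (hN.eq_of_le hproper hNle)
  refine ⟨M, ⟨hMreal, hNM⟩, fun M' ⟨hM'real, hNM'⟩ => ?_⟩
  rw [eq_comap_of_coe_eq_idealB hN.ne_top hM'real.1 hNM',
    eq_comap_of_coe_eq_idealB hN.ne_top hMreal.1 hNM]
end

section
/- For any proper ideal I of C(X), the ideal I* of B₁(X) generated by I (as a subset of B₁(X)) is a proper ideal of B₁(X). -/
open Filter Topology

/-! If `I ⊆ C(X)` generated the unit ideal of `B₁(X)`, already finitely many `u₁, …, uₙ ∈ I`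
would. These can have no common zero `x`, for otherwise the ideal they generate in `B₁(X)` would
lie in the kernel of evaluation at `x`. Hence `∑ uᵢ²` is a continuous, nowhere vanishing element
of `I`, i.e. a unit of `C(X)`. -/

theorem Ideal.exists_finset_subset_map_span_eq_top {R S : Type*} [CommSemiring R] [Semiring S]
    (f : R →+* S) {I : Ideal R} (h : I.map f = ⊤) :
    ∃ s : Finset R, (s : Set R) ⊆ I ∧ (Ideal.span (s : Set R)).map f = ⊤ := by
  classical
  obtain ⟨t, htI, ht⟩ := (Ideal.span_eq_top_iff_finite _).1 h
  obtain ⟨s, hsI, rfl⟩ := Finset.subset_set_image_iff.1 htI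
  exact ⟨s, hsI, by rwa [Ideal.map_span, ← Finset.coe_image]⟩

namespace CFun

variable {X : Type*} [TopologicalSpace X]

theorem isUnit_of_forall_ne_zero {g : CFun X} (hg : ∀ x, (g : X → ℝ) x ≠ 0) : IsUnit g :=
  .of_mul_eq_one ⟨fun x => ((g : X → ℝ) x)⁻¹, g.2.inv₀ hg⟩ <|
    Subtype.ext <| funext fun x => mul_inv_cancel₀ (hg x)

theorem sum_mul_self_apply (s : Finset (CFun X)) (x : X) :
    ((∑ u ∈ s, u * u : CFun X) : X → ℝ) x = ∑ u ∈ s, (u : X → ℝ) x * (u : X → ℝ) x :=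
  (map_sum (evalC x) (fun u => u * u) s).trans <| by simp only [map_mul]; rfl

theorem ideal_eq_top_of_forall_exists_ne_zero {I : Ideal (CFun X)} (s : Finset (CFun X))
    (hsI : (s : Set (CFun X)) ⊆ I) (hs : ∀ x, ∃ u ∈ s, (u : X → ℝ) x ≠ 0) : I = ⊤ := by
  refine I.eq_top_of_isUnit_mem (x := ∑ u ∈ s, u * u)
    (I.sum_mem fun u hu => I.mul_mem_left u (hsI hu)) (isUnit_of_forall_ne_zero fun x => ?_)
  obtain ⟨u, hu, hux⟩ := hs x
  rw [sum_mul_self_apply, Ne, Finset.sum_mul_self_eq_zero_iff]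
  exact fun h => hux (h u hu)

end CFun

theorem map_inclB_le_ker_evalB {X : Type*} [TopologicalSpace X] (x : X) {J : Ideal (CFun X)}
    (hJ : J ≤ RingHom.ker (evalC x)) : J.map (inclB X) ≤ RingHom.ker (evalB x) :=
  Ideal.map_le_iff_le_comap.2 fun _ hu => hJ hu

theorem span_of_proper_is_proper {X : Type*} [TopologicalSpace X]
    (I : Ideal (CFun X)) (hI : I ≠ ⊤) :
    Ideal.span (inclB X '' (↑I : Set (CFun X))) ≠ (⊤ : Ideal (B1 X)) := by
  intro h
  obtain ⟨s, hsI, hs⟩ := Ideal.exists_finset_subset_map_span_eq_top (inclB X) h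
  refine hI (CFun.ideal_eq_top_of_forall_exists_ne_zero s hsI fun x => ?_)
  by_contra! hx
  have hker : Ideal.span (s : Set (CFun X)) ≤ RingHom.ker (evalC x) :=
    Ideal.span_le.2 fun u hu => hx u hu
  exact RingHom.ker_ne_top (evalB x) (top_le_iff.1 (hs ▸ map_inclB_le_ker_evalB x hker))
end
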